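/- Let ν be a probability measure mutually absolutely continuous with μ, define J̃ := J + (1/ρ)·log(dν/dμ), and define the loss L := ∫ [exp(−ρ J̃) / ∫ exp(−ρ J̃) dν] · log(dμ/dν) dν. Then, assuming log(dμ⋆/dμ) and log(dμ/dν) are μ⋆-integrable, D_KL(μ⋆‖ν) = D_KL(μ⋆‖μ) + L; hence minimizing the importance-weighted loss L over a family of equivalent measures ν is equivalent to minimizing the KL divergence from the Gibbs measure μ⋆ to ν. -/
import Mathlib


open MeasureTheory Real
open scoped ENNReal

/-- Kullback–Leibler divergence `D_KL(α‖β) = ∫ log(dα/dβ) dα`. -/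
noncomputable def klDiv' {Ω : Type*} [MeasurableSpace Ω] (α β : Measure Ω) : ℝ :=
  ∫ x, Real.log (α.rnDeriv β x).toReal ∂α

/-- Minimizing the importance-weighted loss minimizes the KL divergence to the Gibbs
measure: for `ν` mutually absolutely continuous with `μ`, `J̃ := J + (1/ρ)·log(dν/dμ)`,
and loss `L := ∫ [exp(−ρ J̃)/∫ exp(−ρ J̃) dν]·log(dμ/dν) dν`, assuming `log(dμ⋆/dμ)` and
`log(dμ/dν)` are `μ⋆`-integrable, one has `D_KL(μ⋆‖ν) = D_KL(μ⋆‖μ) + L`. -/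
theorem klDiv_eq_const_add_importance_weighted_loss {Ω : Type*} [MeasurableSpace Ω]
    (μ : Measure Ω) [IsProbabilityMeasure μ]
    (J : Ω → ℝ) (hJ : Measurable J) (ρ : ℝ) (hρ : 0 < ρ)
    (hZint : Integrable (fun x => Real.exp (-ρ * J x)) μ)
    (hZpos : 0 < ∫ x, Real.exp (-ρ * J x) ∂μ)
    (ν : Measure Ω) [IsProbabilityMeasure ν] (hνμ : ν ≪ μ) (hμν : μ ≪ ν)
    (Jt : Ω → ℝ)
    (hJt : Jt = fun x => J x + (1 / ρ) * Real.log (ν.rnDeriv μ x).toReal)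
    (L : ℝ)
    (hL : L = ∫ x, (Real.exp (-ρ * Jt x) / ∫ y, Real.exp (-ρ * Jt y) ∂ν) *
      Real.log (μ.rnDeriv ν x).toReal ∂ν)
    (μStar : Measure Ω)
    (hμStar : μStar = μ.withDensity
      (fun x => ENNReal.ofReal (Real.exp (-ρ * J x) / ∫ y, Real.exp (-ρ * J y) ∂μ)))
    (h₀ : Integrable (fun x => Real.log (μStar.rnDeriv μ x).toReal) μStar)
    (h₁ : Integrable (fun x => Real.log (μ.rnDeriv ν x).toReal) μStar) :
    klDiv' μStar ν = klDiv' μStar μ + L := by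
  subst hμStar hJt hL
  beta_reduce
  set Z := ∫ x, Real.exp (-ρ * J x) ∂μ with hZdef
  set g : Ω → ℝ≥0∞ := fun x => ENNReal.ofReal (Real.exp (-ρ * J x) / Z) with hgdef
  have hρ0 : ρ ≠ 0 := hρ.ne'
  have hgmeas : Measurable g := ((hJ.const_mul (-ρ)).exp.div_const Z).ennreal_ofReal
  -- μ⋆ is a finite measure
  have hlint : ∫⁻ x, g x ∂μ ≠ ∞ := by
    rw [hgdef, ← ofReal_integral_eq_lintegral_ofReal (hZint.div_const Z)
      (Filter.Eventually.of_forall fun x => div_nonneg (Real.exp_pos _).le hZpos.le)]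
    exact ENNReal.ofReal_ne_top
  haveI : IsFiniteMeasure (μ.withDensity g) := isFiniteMeasure_withDensity hlint
  have hac : μ.withDensity g ≪ μ := withDensity_absolutelyContinuous μ g
  have hg_rn : (μ.withDensity g).rnDeriv μ =ᵐ[μ] g := Measure.rnDeriv_withDensity μ hgmeas
  have hμν_pos : ∀ᵐ x ∂μ, 0 < μ.rnDeriv ν x := Measure.rnDeriv_pos hμν
  have hμν_lt : ∀ᵐ x ∂μ, μ.rnDeriv ν x < ∞ := hμν.ae_le (Measure.rnDeriv_lt_top μ ν)
  have hν_pos : ∀ᵐ x ∂μ, 0 < ν.rnDeriv μ x := Measure.rnDeriv_pos' hμν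
  have hν_lt : ∀ᵐ x ∂μ, ν.rnDeriv μ x < ∞ := Measure.rnDeriv_lt_top ν μ
  -- the normalizing constant of J̃ equals Z
  have hZt : (∫ y, Real.exp (-ρ * (J y + (1 / ρ) * Real.log (ν.rnDeriv μ y).toReal)) ∂ν) = Z := by
    rw [← integral_rnDeriv_smul hνμ
      (f := fun y => Real.exp (-ρ * (J y + (1 / ρ) * Real.log (ν.rnDeriv μ y).toReal)))]
    refine integral_congr_ae ?_
    filter_upwards [hν_pos, hν_lt] with x hp hl
    have hr : 0 < (ν.rnDeriv μ x).toReal := ENNReal.toReal_pos hp.ne' hl.ne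
    have harg : -ρ * (J x + (1 / ρ) * Real.log (ν.rnDeriv μ x).toReal)
        = -ρ * J x - Real.log (ν.rnDeriv μ x).toReal := by field_simp; ring
    rw [smul_eq_mul, harg, Real.exp_sub, Real.exp_log hr]
    field_simp
  -- the loss equals ∫ log(dμ/dν) dμ⋆
  have hL' : (∫ x, (Real.exp (-ρ * (J x + (1 / ρ) * Real.log (ν.rnDeriv μ x).toReal)) /
        ∫ y, Real.exp (-ρ * (J y + (1 / ρ) * Real.log (ν.rnDeriv μ y).toReal)) ∂ν) *
        Real.log (μ.rnDeriv ν x).toReal ∂ν)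
      = ∫ x, Real.log (μ.rnDeriv ν x).toReal ∂(μ.withDensity g) := by
    rw [hZt, ← integral_rnDeriv_smul hac
        (f := fun x => Real.log (μ.rnDeriv ν x).toReal),
      ← integral_rnDeriv_smul hνμ
        (f := fun x => (Real.exp (-ρ * (J x + (1 / ρ) * Real.log (ν.rnDeriv μ x).toReal)) / Z) *
          Real.log (μ.rnDeriv ν x).toReal)]
    refine integral_congr_ae ?_
    filter_upwards [hν_pos, hν_lt, hg_rn] with x hp hl hgx
    have hr : 0 < (ν.rnDeriv μ x).toReal := ENNReal.toReal_pos hp.ne' hl.ne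
    have harg : -ρ * (J x + (1 / ρ) * Real.log (ν.rnDeriv μ x).toReal)
        = -ρ * J x - Real.log (ν.rnDeriv μ x).toReal := by field_simp; ring
    rw [smul_eq_mul, smul_eq_mul, harg, Real.exp_sub, Real.exp_log hr, hgx, hgdef,
      ENNReal.toReal_ofReal (div_nonneg (Real.exp_pos _).le hZpos.le)]
    field_simp
  -- chain rule for the log of the Radon–Nikodym derivative
  have hchain : ∀ᵐ x ∂(μ.withDensity g),
      Real.log ((μ.withDensity g).rnDeriv ν x).toReal
        = Real.log ((μ.withDensity g).rnDeriv μ x).toReal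
          + Real.log (μ.rnDeriv ν x).toReal := by
    have h1 : (μ.withDensity g).rnDeriv μ * μ.rnDeriv ν =ᵐ[μ] (μ.withDensity g).rnDeriv ν :=
      hμν.ae_le (Measure.rnDeriv_mul_rnDeriv hac)
    filter_upwards [hac.ae_le h1, hac.ae_le hg_rn, hac.ae_le hμν_pos, hac.ae_le hμν_lt]
      with x h1x hgx hp hl
    have hA : ((μ.withDensity g).rnDeriv μ x).toReal ≠ 0 := by
      rw [hgx, hgdef, ENNReal.toReal_ofReal (div_nonneg (Real.exp_pos _).le hZpos.le)]
      exact (div_pos (Real.exp_pos _) hZpos).ne'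
    have hB : (μ.rnDeriv ν x).toReal ≠ 0 := (ENNReal.toReal_pos hp.ne' hl.ne).ne'
    rw [← h1x, Pi.mul_apply, ENNReal.toReal_mul, Real.log_mul hA hB]
  unfold klDiv'
  rw [hL', integral_congr_ae hchain, integral_add h₀ h₁]
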